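/- Let 1 ≤ k < n and let L ≥ 0 satisfy L < SA[k] and L < SA[k+1]. Suppose that for every d with 0 ≤ d < L we have T[SA[k]−d−1] = T[SA[k+1]−d−1]. Then for every d' with 0 ≤ d' ≤ L, the suffixes T[SA[k]−d'..n] and T[SA[k+1]−d'..n] are lexicographically consecutive among the suffixes of T; that is, SA^{-1}[SA[k+1]−d'] = SA^{-1}[SA[k]−d'] + 1. -/

import Mathlib

/-!
Induction on `d'`.  The step is the LF-mapping property of the Burrows–Wheeler transform: if
the suffixes at `p + 1` and `q + 1` are adjacent in suffix order and `T[p] = T[q]`, then the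
suffixes at `p` and `q` are adjacent as well.  Indeed `T[p..n] < T[q..n]`, and a suffix strictly
between them would have to start with the same character `T[p]`, so its tail would lie strictly
between `T[p+1..n]` and `T[q+1..n]`.
-/

variable {α : Type*} [LinearOrder α]

/-- The suffix `T[p..n]` of a 1-indexed string `T[1..n]`, as a list. -/
def sfx (T : ℕ → α) (n p : ℕ) : List α :=
  (List.range (n + 1 - p)).map (fun d => T (p + d))

/-- The Burrows–Wheeler transform determined by the text `T`, its suffix array `SA`,
and the end-of-string character `dollar`:  `BWT[i] = T[SA[i]-1]` if `SA[i] > 1`,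
and `BWT[i] = $` if `SA[i] = 1`. -/
def bwt (T : ℕ → α) (SA : ℕ → ℕ) (dollar : α) (i : ℕ) : α :=
  if SA i = 1 then dollar else T (SA i - 1)

lemma List.exists_eq_cons_of_cons_lt_of_lt_cons {c : α} {x y l : List α}
    (hx : c :: x < l) (hy : l < c :: y) : ∃ z, l = c :: z ∧ x < z ∧ z < y := by
  cases l with
  | nil => exact absurd hx (List.not_lt_nil _)
  | cons d z =>
    rw [List.cons_lt_cons_iff] at hx hy
    rcases hx with hcd | ⟨rfl, hxz⟩
    · rcases hy with hdc | ⟨rfl, -⟩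
      · exact absurd (hcd.trans hdc) (lt_irrefl _)
      · exact absurd hcd (lt_irrefl _)
    · rcases hy with hdc | ⟨-, hzy⟩
      · exact absurd hdc (lt_irrefl _)
      · exact ⟨z, rfl, hxz, hzy⟩

lemma sfx_eq_nil {β : Type*} {T : ℕ → β} {n p : ℕ} (h : n < p) : sfx T n p = [] := by
  simp [sfx, show n + 1 - p = 0 by omega]

lemma sfx_eq_cons {β : Type*} (T : ℕ → β) {n p : ℕ} (h : p ≤ n) :
    sfx T n p = T p :: sfx T n (p + 1) := by
  rw [sfx, show n + 1 - p = (n - p) + 1 by omega, List.range_succ_eq_map, sfx,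
    show n + 1 - (p + 1) = n - p by omega]
  simp only [List.map_cons, List.map_map, add_zero]
  exact congrArg _ (List.map_congr_left fun d _ => congrArg T (by omega))

structure IsSuffixArray (T : ℕ → α) (n : ℕ) (SA ISA : ℕ → ℕ) : Prop where
  sa_mem : ∀ i, 1 ≤ i → i ≤ n → 1 ≤ SA i ∧ SA i ≤ n
  sorted : ∀ i j, 1 ≤ i → i < j → j ≤ n → sfx T n (SA i) < sfx T n (SA j)
  isa_sa : ∀ i, 1 ≤ i → i ≤ n → ISA (SA i) = i
  isa_mem_sa_isa : ∀ p, 1 ≤ p → p ≤ n → 1 ≤ ISA p ∧ ISA p ≤ n ∧ SA (ISA p) = p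

namespace IsSuffixArray

variable {T : ℕ → α} {n : ℕ} {SA ISA : ℕ → ℕ}

lemma sfx_lt_of_isa_lt (hS : IsSuffixArray T n SA ISA) {a b : ℕ}
    (ha : 1 ≤ a) (han : a ≤ n) (hb : 1 ≤ b) (hbn : b ≤ n) (hab : ISA a < ISA b) :
    sfx T n a < sfx T n b := by
  obtain ⟨hIa, -, hSa⟩ := hS.isa_mem_sa_isa a ha han
  obtain ⟨-, hIb, hSb⟩ := hS.isa_mem_sa_isa b hb hbn
  simpa only [hSa, hSb] using hS.sorted _ _ hIa hab hIb

lemma isa_lt_of_sfx_lt (hS : IsSuffixArray T n SA ISA) {a b : ℕ}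
    (ha : 1 ≤ a) (han : a ≤ n) (hb : 1 ≤ b) (hbn : b ≤ n) (hab : sfx T n a < sfx T n b) :
    ISA a < ISA b := by
  rcases lt_trichotomy (ISA a) (ISA b) with h | h | h
  · exact h
  · have hSa := (hS.isa_mem_sa_isa a ha han).2.2
    have hSb := (hS.isa_mem_sa_isa b hb hbn).2.2
    rw [← hSa, ← hSb, h] at hab
    exact absurd hab (lt_irrefl _)
  · exact absurd (hS.sfx_lt_of_isa_lt hb hbn ha han h) (asymm hab)

lemma isa_eq_succ_of_isa_succ_eq_succ (hS : IsSuffixArray T n SA ISA) {p q : ℕ}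
    (hp : 1 ≤ p) (hpn : p < n) (hq : 1 ≤ q) (hqn : q < n)
    (hadj : ISA (q + 1) = ISA (p + 1) + 1) (hpq : T p = T q) :
    ISA q = ISA p + 1 := by
  have hp1n : p + 1 ≤ n := hpn
  have hq1n : q + 1 ≤ n := hqn
  have hlt : sfx T n p < sfx T n q := by
    rw [sfx_eq_cons T hpn.le, sfx_eq_cons T hqn.le, hpq, List.cons_lt_cons_iff]
    exact Or.inr ⟨rfl, hS.sfx_lt_of_isa_lt (by omega) hp1n (by omega) hq1n (by omega)⟩
  have hpq_isa := hS.isa_lt_of_sfx_lt hp hpn.le hq hqn.le hlt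
  by_contra hne
  obtain ⟨hIp, -, hSp⟩ := hS.isa_mem_sa_isa p hp hpn.le
  obtain ⟨-, hIq, hSq⟩ := hS.isa_mem_sa_isa q hq hqn.le
  -- `r` is the suffix ranked right after `p`, hence strictly between `p` and `q`
  set r := SA (ISA p + 1)
  obtain ⟨-, hrn⟩ := hS.sa_mem (ISA p + 1) (by omega) (by omega)
  have hpr : sfx T n p < sfx T n r := by
    simpa only [hSp] using hS.sorted _ _ hIp (Nat.lt_succ_self _) (by omega)
  have hrq : sfx T n r < sfx T n q := by
    simpa only [hSq] using hS.sorted _ _ (by omega) (by omega) hIq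
  rw [sfx_eq_cons T hpn.le] at hpr
  rw [sfx_eq_cons T hqn.le, ← hpq] at hrq
  obtain ⟨z, hrz, hpz, hzq⟩ := List.exists_eq_cons_of_cons_lt_of_lt_cons hpr hrq
  rw [sfx_eq_cons T hrn, List.cons.injEq] at hrz
  rw [← hrz.2] at hpz hzq
  have hr1n : r + 1 ≤ n := by
    by_contra h
    rw [sfx_eq_nil (p := r + 1) (by omega)] at hpz
    exact List.not_lt_nil _ hpz
  have hIr : ISA r = ISA p + 1 := hS.isa_sa _ (by omega) (by omega)
  have := hS.isa_lt_of_sfx_lt (by omega) hp1n (by omega) hr1n hpz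
  have := hS.isa_lt_of_sfx_lt (by omega) hr1n (by omega) hq1n hzq
  omega

end IsSuffixArray

theorem statement5_general
    (n : ℕ) (T : ℕ → α) (SA : ℕ → ℕ)
    -- `SA` is a permutation of `{1,...,n}` sorting the suffixes lexicographically
    (hSAran : ∀ i, 1 ≤ i → i ≤ n → 1 ≤ SA i ∧ SA i ≤ n)
    (hSAmono : ∀ i j, 1 ≤ i → i < j → j ≤ n → sfx T n (SA i) < sfx T n (SA j))
    -- `ISA` is the inverse permutation of `SA`
    (ISA : ℕ → ℕ)
    (hISA : ∀ i, 1 ≤ i → i ≤ n → ISA (SA i) = i)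
    (hISAran : ∀ p, 1 ≤ p → p ≤ n → 1 ≤ ISA p ∧ ISA p ≤ n ∧ SA (ISA p) = p)
    (k : ℕ) (hk1 : 1 ≤ k) (hk2 : k < n)
    (L : ℕ) (hL1 : L < SA k) (hL2 : L < SA (k + 1))
    (hpre : ∀ d, d < L → T (SA k - d - 1) = T (SA (k + 1) - d - 1)) :
    ∀ d', d' ≤ L → ISA (SA (k + 1) - d') = ISA (SA k - d') + 1 := by
  have hS : IsSuffixArray T n SA ISA := ⟨hSAran, hSAmono, hISA, hISAran⟩
  have hSAk := (hSAran k hk1 hk2.le).2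
  have hSAk' := (hSAran (k + 1) (by omega) hk2).2
  intro d' hd'
  induction d' with
  | zero => simp only [Nat.sub_zero, hISA k hk1 hk2.le, hISA (k + 1) (by omega) hk2]
  | succ d ih =>
    have hp : SA k - d = SA k - (d + 1) + 1 := by omega
    have hq : SA (k + 1) - d = SA (k + 1) - (d + 1) + 1 := by omega
    refine hS.isa_eq_succ_of_isa_succ_eq_succ (by omega) (by omega) (by omega) (by omega) ?_ ?_
    · rw [← hp, ← hq]
      exact ih (by omega)
    · simpa only [Nat.sub_sub] using hpre d (by omega)

/-- If the suffixes `T[SA[k]..n]` and `T[SA[k+1]..n]` are preceded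
in `T` by the same string of length `L` (with `L < SA[k]` and `L < SA[k+1]`), then for
every `0 ≤ d' ≤ L` the suffixes `T[SA[k]-d'..n]` and `T[SA[k+1]-d'..n]` are
lexicographically consecutive: `ISA[SA[k+1]-d'] = ISA[SA[k]-d'] + 1`. -/
theorem statement5
    (n : ℕ) (T : ℕ → α) (dollar : α) (SA : ℕ → ℕ)
    -- `T[1..n]` is a string of length `n ≥ 1` ending with `$`,
    -- which is smaller than every other character and occurs only at position `n`
    (hn : 1 ≤ n) (hTn : T n = dollar)
    (hdollar : ∀ p, 1 ≤ p → p < n → dollar < T p)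
    -- `SA` is a permutation of `{1,...,n}` sorting the suffixes lexicographically
    (hSAran : ∀ i, 1 ≤ i → i ≤ n → 1 ≤ SA i ∧ SA i ≤ n)
    (hSAsurj : ∀ p, 1 ≤ p → p ≤ n → ∃ i, 1 ≤ i ∧ i ≤ n ∧ SA i = p)
    (hSAmono : ∀ i j, 1 ≤ i → i < j → j ≤ n → sfx T n (SA i) < sfx T n (SA j))
    -- `ISA` is the inverse permutation of `SA`
    (ISA : ℕ → ℕ)
    (hISA : ∀ i, 1 ≤ i → i ≤ n → ISA (SA i) = i)
    (hISAran : ∀ p, 1 ≤ p → p ≤ n → 1 ≤ ISA p ∧ ISA p ≤ n ∧ SA (ISA p) = p)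
    (k : ℕ) (hk1 : 1 ≤ k) (hk2 : k < n)
    (L : ℕ) (hL1 : L < SA k) (hL2 : L < SA (k + 1))
    (hpre : ∀ d, d < L → T (SA k - d - 1) = T (SA (k + 1) - d - 1)) :
    ∀ d', d' ≤ L → ISA (SA (k + 1) - d') = ISA (SA k - d') + 1 :=
  statement5_general n T SA hSAran hSAmono ISA hISA hISAran k hk1 hk2 L hL1 hL2 hpre
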